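/- arXiv:2203.10682 — 4 statements merged into one kernel-verified Lean document; each statement's English description precedes it below -/
import Mathlib

section
/- Let T > 0, d_x, d_y, d_s ∈ ℕ with d_s = 2d_x. Let A, Ψ : [0,T] → ℝ^{d_x×d_x}, C : [0,T] → ℝ^{d_y×d_x}, σ : [0,T] → ℝ^{d_x×d_ω}, γ : [0,T] → ℝ^{d_y×d_ν} be continuous with γ(t)γ(t)ᵀ invertible, and let G := BR⁻¹Bᵀ : [0,T] → ℝ^{d_x×d_x} be continuous. Suppose Σ : [0,T] → ℝ^{d_s×d_s} is differentiable with symmetric values, with blocks Σ_xx, Σ_xz, Σ_zx, Σ_zz, satisfying Σ_xz(t) = Σ_zz(t) for all t. Define S := Σ_xx − Σ_zz, L := S Cᵀ(γγᵀ)⁻¹, Ã := [[A, −GΨ],[LC, A − GΨ − LC]], and D̃ := [[σσᵀ, O],[O, Lγγᵀ Lᵀ]]. If dΣ/dt = D̃ + ÃΣ + ΣÃᵀ on [0,T], then S is differentiable and satisfies the filter Riccati equation dS/dt = σσᵀ + AS + SAᵀ − S Cᵀ(γγᵀ)⁻¹ C S on [0,T]. -/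
open Matrix Set

/-- Under the block covariance dynamics `dΣ/dt = D̃ + ÃΣ + ΣÃᵀ` of the extended state
`(x,z)` (with memory dimension equal to the state dimension, so `d_s = 2 d_x`) and the
relation `Σ_xz = Σ_zz`, the conditional covariance `S = Σ_xx − Σ_zz` solves the filter
Riccati equation `dS/dt = σσᵀ + AS + SAᵀ − SCᵀ(γγᵀ)⁻¹CS`. -/
theorem stmt_6 {dx dy dω dν : ℕ} (T : ℝ) (hT : 0 < T)
    (A Ψ G : ℝ → Matrix (Fin dx) (Fin dx) ℝ)
    (C : ℝ → Matrix (Fin dy) (Fin dx) ℝ)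
    (σ : ℝ → Matrix (Fin dx) (Fin dω) ℝ)
    (γ : ℝ → Matrix (Fin dy) (Fin dν) ℝ)
    (hA : Continuous A) (hΨ : Continuous Ψ) (hG : Continuous G)
    (hC : Continuous C) (hσ : Continuous σ) (hγ : Continuous γ)
    (hγinv : ∀ t, IsUnit (γ t * (γ t)ᵀ).det)
    (Sig : ℝ → Matrix (Fin dx ⊕ Fin dx) (Fin dx ⊕ Fin dx) ℝ)
    (hSigsymm : ∀ t, (Sig t).IsSymm)
    (hxz : ∀ t, (Sig t).toBlocks₁₂ = (Sig t).toBlocks₂₂)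
    (S : ℝ → Matrix (Fin dx) (Fin dx) ℝ)
    (L : ℝ → Matrix (Fin dx) (Fin dy) ℝ)
    (hS : ∀ t, S t = (Sig t).toBlocks₁₁ - (Sig t).toBlocks₂₂)
    (hL : ∀ t, L t = S t * (C t)ᵀ * (γ t * (γ t)ᵀ)⁻¹)
    (Atil Dtil : ℝ → Matrix (Fin dx ⊕ Fin dx) (Fin dx ⊕ Fin dx) ℝ)
    (hAtil : ∀ t, Atil t =
      fromBlocks (A t) (-(G t * Ψ t)) (L t * C t) (A t - G t * Ψ t - L t * C t))
    (hDtil : ∀ t, Dtil t =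
      fromBlocks (σ t * (σ t)ᵀ) 0 0 (L t * (γ t * (γ t)ᵀ) * (L t)ᵀ))
    (hSig : ∀ t ∈ Icc (0 : ℝ) T, ∀ i j, HasDerivAt (fun τ => Sig τ i j)
      ((Dtil t + Atil t * Sig t + Sig t * (Atil t)ᵀ) i j) t) :
    ∀ t ∈ Icc (0 : ℝ) T, ∀ i j, HasDerivAt (fun τ => S τ i j)
      ((σ t * (σ t)ᵀ + A t * S t + S t * (A t)ᵀ
        - S t * (C t)ᵀ * (γ t * (γ t)ᵀ)⁻¹ * C t * S t) i j) t := by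
  intro t ht i j
  have hsym := (hSigsymm t)
  set P := (Sig t).toBlocks₁₁ with hPdef
  set Q := (Sig t).toBlocks₂₂ with hQdef
  have happ : ∀ a b, Sig t b a = Sig t a b := fun a b => hsym.apply a b
  have hPsymm : Pᵀ = P := by
    ext a b; simp only [Matrix.transpose_apply, hPdef, Matrix.toBlocks₁₁, Matrix.of_apply]
    exact happ _ _
  have hQsymm : Qᵀ = Q := by
    ext a b; simp only [Matrix.transpose_apply, hQdef, Matrix.toBlocks₂₂, Matrix.of_apply]
    exact happ _ _
  have h21 : (Sig t).toBlocks₂₁ = Q := by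
    ext a b
    have h12 := congrFun (congrFun (hxz t) b) a
    simp only [Matrix.toBlocks₁₂, Matrix.toBlocks₂₂, Matrix.of_apply] at h12
    simp only [Matrix.toBlocks₂₁, Matrix.toBlocks₂₂, Matrix.of_apply]
    rw [happ, h12, happ]
    rfl
  have hSigt : Sig t = fromBlocks P Q Q Q := by
    conv_lhs => rw [← Matrix.fromBlocks_toBlocks (Sig t)]
    rw [hxz t, h21]
  have hSsymm : (S t)ᵀ = S t := by
    rw [hS t, Matrix.transpose_sub, hPsymm, hQsymm]
  set W := γ t * (γ t)ᵀ with hW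
  have hWsymm : Wᵀ = W := by rw [hW, Matrix.transpose_mul, Matrix.transpose_transpose]
  have hLγ : L t * W * (L t)ᵀ = S t * (C t)ᵀ * W⁻¹ * C t * S t := by
    rw [hL t, Matrix.transpose_mul, Matrix.transpose_mul, Matrix.transpose_nonsing_inv,
      hWsymm, Matrix.transpose_transpose, hSsymm]
    calc S t * (C t)ᵀ * W⁻¹ * W * (W⁻¹ * (C t * S t))
        = S t * (C t)ᵀ * (W⁻¹ * (W * (W⁻¹ * (C t * S t)))) := by
          simp only [Matrix.mul_assoc]
      _ = S t * (C t)ᵀ * W⁻¹ * C t * S t := by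
          rw [Matrix.nonsing_inv_mul_cancel_left _ _ (hγinv t)]
          simp only [Matrix.mul_assoc]
  have key : (Dtil t + Atil t * Sig t + Sig t * (Atil t)ᵀ).toBlocks₁₁
      - (Dtil t + Atil t * Sig t + Sig t * (Atil t)ᵀ).toBlocks₂₂
      = σ t * (σ t)ᵀ + A t * S t + S t * (A t)ᵀ
        - S t * (C t)ᵀ * W⁻¹ * C t * S t := by
    rw [← hLγ, hAtil t, hDtil t, hSigt, Matrix.fromBlocks_transpose,
      Matrix.fromBlocks_multiply, Matrix.fromBlocks_multiply,
      Matrix.fromBlocks_add, Matrix.fromBlocks_add,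
      Matrix.toBlocks_fromBlocks₁₁, Matrix.toBlocks_fromBlocks₂₂, hS t, ← hPdef, ← hQdef,
      ← hW]
    simp only [Matrix.transpose_sub, Matrix.transpose_add, Matrix.transpose_neg,
      Matrix.transpose_mul, hQsymm]
    noncomm_ring
  have h1 := (hSig t ht (Sum.inl i) (Sum.inl j)).sub (hSig t ht (Sum.inr i) (Sum.inr j))
  have hfun : (fun τ => S τ i j)
      = fun τ => Sig τ (Sum.inl i) (Sum.inl j) - Sig τ (Sum.inr i) (Sum.inr j) := by
    funext τ
    rw [hS τ]
    rfl
  have hval : (σ t * (σ t)ᵀ + A t * S t + S t * (A t)ᵀ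
        - S t * (C t)ᵀ * W⁻¹ * C t * S t) i j
      = (Dtil t + Atil t * Sig t + Sig t * (Atil t)ᵀ) (Sum.inl i) (Sum.inl j)
        - (Dtil t + Atil t * Sig t + Sig t * (Atil t)ᵀ) (Sum.inr i) (Sum.inr j) := by
    rw [← key]; rfl
  rw [hfun, hval]
  exact h1
end

section
/- Let T > 0, d_x, d_y ∈ ℕ. Let A, Ψ, G : [0,T] → ℝ^{d_x×d_x}, C : [0,T] → ℝ^{d_y×d_x}, σ : [0,T] → ℝ^{d_x×d_ω}, γ : [0,T] → ℝ^{d_y×d_ν} be continuous with γ(t)γ(t)ᵀ invertible. Suppose Σ : [0,T] → ℝ^{2d_x×2d_x} is continuously differentiable with symmetric values, with blocks Σ_xx, Σ_xz, Σ_zx, Σ_zz. Define S := Σ_xx − Σ_zz, L := S Cᵀ(γγᵀ)⁻¹, Ã := [[A, −GΨ],[LC, A − GΨ − LC]], and D̃ := [[σσᵀ, O],[O, Lγγᵀ Lᵀ]]. If dΣ/dt = D̃ + ÃΣ + ΣÃᵀ on [0,T] and Σ_xz(0) = Σ_zz(0), then Σ_xz(t) = Σ_zz(t) for all t ∈ [0,T].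 -/
open Matrix Set

/-!
With `E := Σ_xz − Σ_zz`, the gain `L = S Cᵀ (γγᵀ)⁻¹` turns the injected noise `L γγᵀ Lᵀ` into
`S (LC)ᵀ`; together with the symmetry of `Σ`, the `(1,2)` minus `(2,2)` block of the dynamics
then becomes the homogeneous linear equation
`E' = (A − LC) E + E (A − GΨ − LC)ᵀ − Eᵀ (LC)ᵀ`.
Its coefficients are continuous, hence bounded on `[0, T]`, so `‖E'‖ ≤ K ‖E‖` in the Frobenius
norm, and Grönwall's inequality forces `E ≡ 0` from `E 0 = 0`.
-/

attribute [local instance] Matrix.frobeniusNormedAddCommGroup Matrix.frobeniusNormedSpace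
  Matrix.frobeniusNormedRing

namespace Matrix

variable {m n : Type*} [Fintype m] [Fintype n]

theorem hasDerivAt_of_forall_hasDerivAt_apply [DecidableEq m] [DecidableEq n]
    {f : ℝ → Matrix m n ℝ} {f' : Matrix m n ℝ} {t : ℝ}
    (h : ∀ i j, HasDerivAt (fun τ => f τ i j) (f' i j) t) : HasDerivAt f f' t := by
  have hsum : HasDerivAt (fun τ => ∑ i, ∑ j, single i j (f τ i j))
      (∑ i, ∑ j, single i j (f' i j)) t :=
    HasDerivAt.fun_sum fun i _ => HasDerivAt.fun_sum fun j _ => by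
      simpa only [smul_single, smul_eq_mul, mul_one] using (h i j).smul_const (single i j (1 : ℝ))
  simpa only [← matrix_eq_sum_single] using hsum

theorem _root_.Continuous.matrix_inv {X R : Type*} [TopologicalSpace X] [NormedCommRing R]
    [CompleteSpace R] [DecidableEq n] {A : X → Matrix n n R} (hA : Continuous A)
    (hdet : ∀ x, IsUnit (A x).det) :
    Continuous fun x => (A x)⁻¹ :=
  continuous_iff_continuousAt.2 fun x =>
    (continuousAt_matrix_inv _ (NormedRing.inverse_continuousAt (hdet x).unit)).comp hA.continuousAt

theorem frobenius_norm_mul_add_mul_sub_transpose_mul_le (M₁ M₂ M₃ E : Matrix n n ℝ) :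
    ‖M₁ * E + E * M₂ - Eᵀ * M₃‖ ≤ (‖M₁‖ + ‖M₂‖ + ‖M₃‖) * ‖E‖ :=
  calc ‖M₁ * E + E * M₂ - Eᵀ * M₃‖ ≤ ‖M₁ * E‖ + ‖E * M₂‖ + ‖Eᵀ * M₃‖ :=
        (norm_sub_le _ _).trans (by gcongr; exact norm_add_le _ _)
    _ ≤ ‖M₁‖ * ‖E‖ + ‖E‖ * ‖M₂‖ + ‖Eᵀ‖ * ‖M₃‖ := by
        gcongr <;> exact frobenius_norm_mul _ _
    _ = (‖M₁‖ + ‖M₂‖ + ‖M₃‖) * ‖E‖ := by rw [frobenius_norm_transpose]; ring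

theorem eq_zero_of_hasDerivWithinAt_mul_add_mul_sub_transpose_mul
    {E M₁ M₂ M₃ : ℝ → Matrix n n ℝ} {a b : ℝ}
    (hM₁ : ContinuousOn M₁ (Icc a b)) (hM₂ : ContinuousOn M₂ (Icc a b))
    (hM₃ : ContinuousOn M₃ (Icc a b)) (hE : ContinuousOn E (Icc a b))
    (hE' : ∀ t ∈ Ico a b,
      HasDerivWithinAt E (M₁ t * E t + E t * M₂ t - (E t)ᵀ * M₃ t) (Ici t) t)
    (ha : E a = 0) : ∀ t ∈ Icc a b, E t = 0 := by
  obtain ⟨K, hK⟩ := isCompact_Icc.exists_bound_of_continuousOn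
    (((continuous_norm.comp_continuousOn hM₁).add
      (continuous_norm.comp_continuousOn hM₂)).add (continuous_norm.comp_continuousOn hM₃))
  refine eq_zero_of_abs_deriv_le_mul_abs_self_of_eq_zero_right (K := K) hE hE' ha fun t ht => ?_
  calc _ ≤ (‖M₁ t‖ + ‖M₂ t‖ + ‖M₃ t‖) * ‖E t‖ :=
        frobenius_norm_mul_add_mul_sub_transpose_mul_le _ _ _ _
    _ ≤ K * ‖E t‖ := by
        gcongr
        exact (le_abs_self _).trans (hK t (Ico_subset_Icc_self ht))

theorem toBlocks₁₂_sub_toBlocks₂₂_lyapunov {R : Type*} [CommRing R]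
    {Sig Atil Dtil : Matrix (n ⊕ n) (n ⊕ n) R} {A P K Q : Matrix n n R} (hSig : Sig.IsSymm)
    (hAtil : Atil = fromBlocks A (-P) K (A - P - K))
    (hDtil : Dtil = fromBlocks Q 0 0 ((Sig.toBlocks₁₁ - Sig.toBlocks₂₂) * Kᵀ)) :
    (Dtil + Atil * Sig + Sig * Atilᵀ).toBlocks₁₂ - (Dtil + Atil * Sig + Sig * Atilᵀ).toBlocks₂₂ =
      (A - K) * (Sig.toBlocks₁₂ - Sig.toBlocks₂₂)
        + (Sig.toBlocks₁₂ - Sig.toBlocks₂₂) * (A - P - K)ᵀ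
        - (Sig.toBlocks₁₂ - Sig.toBlocks₂₂)ᵀ * Kᵀ := by
  obtain ⟨X, Y, Z, W, rfl⟩ : ∃ X Y Z W, Sig = fromBlocks X Y Z W :=
    ⟨_, _, _, _, (fromBlocks_toBlocks Sig).symm⟩
  obtain ⟨-, rfl, -, hW⟩ := isSymm_fromBlocks_iff.1 hSig
  subst hAtil hDtil
  simp only [fromBlocks_transpose, fromBlocks_multiply, fromBlocks_add, toBlocks_fromBlocks₁₁,
    toBlocks_fromBlocks₁₂, toBlocks_fromBlocks₂₂, transpose_sub, hW.eq]
  noncomm_ring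

end Matrix

theorem stmt_8_general {dx dy dω dν : ℕ} (T : ℝ)
    (A Ψ G : ℝ → Matrix (Fin dx) (Fin dx) ℝ)
    (C : ℝ → Matrix (Fin dy) (Fin dx) ℝ)
    (σ : ℝ → Matrix (Fin dx) (Fin dω) ℝ)
    (γ : ℝ → Matrix (Fin dy) (Fin dν) ℝ)
    (hA : Continuous A) (hΨ : Continuous Ψ) (hG : Continuous G)
    (hC : Continuous C) (hγ : Continuous γ)
    (hγinv : ∀ t, IsUnit (γ t * (γ t)ᵀ).det)
    (Sig : ℝ → Matrix (Fin dx ⊕ Fin dx) (Fin dx ⊕ Fin dx) ℝ)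
    (hSigcont : Continuous Sig)
    (hSigsymm : ∀ t, (Sig t).IsSymm)
    (S : ℝ → Matrix (Fin dx) (Fin dx) ℝ)
    (L : ℝ → Matrix (Fin dx) (Fin dy) ℝ)
    (hS : ∀ t, S t = (Sig t).toBlocks₁₁ - (Sig t).toBlocks₂₂)
    (hL : ∀ t, L t = S t * (C t)ᵀ * (γ t * (γ t)ᵀ)⁻¹)
    (Atil Dtil : ℝ → Matrix (Fin dx ⊕ Fin dx) (Fin dx ⊕ Fin dx) ℝ)
    (hAtil : ∀ t, Atil t =
      fromBlocks (A t) (-(G t * Ψ t)) (L t * C t) (A t - G t * Ψ t - L t * C t))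
    (hDtil : ∀ t, Dtil t =
      fromBlocks (σ t * (σ t)ᵀ) 0 0 (L t * (γ t * (γ t)ᵀ) * (L t)ᵀ))
    (hSig : ∀ t ∈ Icc (0 : ℝ) T, ∀ i j, HasDerivAt (fun τ => Sig τ i j)
      ((Dtil t + Atil t * Sig t + Sig t * (Atil t)ᵀ) i j) t)
    (h0 : (Sig 0).toBlocks₁₂ = (Sig 0).toBlocks₂₂) :
    ∀ t ∈ Icc (0 : ℝ) T, (Sig t).toBlocks₁₂ = (Sig t).toBlocks₂₂ := by
  have hS_cont : Continuous S := by
    rw [funext hS]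
    exact (hSigcont.matrix_submatrix Sum.inl Sum.inl).sub
      (hSigcont.matrix_submatrix Sum.inr Sum.inr)
  have hL_cont : Continuous L := by
    simpa only [← funext hL] using (hS_cont.matrix_mul hC.matrix_transpose).matrix_mul
      ((hγ.matrix_mul hγ.matrix_transpose).matrix_inv hγinv)
  have hDtil' : ∀ t, Dtil t = fromBlocks (σ t * (σ t)ᵀ) 0 0
      (((Sig t).toBlocks₁₁ - (Sig t).toBlocks₂₂) * (L t * C t)ᵀ) := fun t => by
    rw [hDtil, ← hS, transpose_mul, hL, nonsing_inv_mul_cancel_right _ _ (hγinv t),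
      Matrix.mul_assoc]
  have hE_deriv : ∀ t ∈ Icc (0 : ℝ) T,
      HasDerivAt (fun τ => (Sig τ).toBlocks₁₂ - (Sig τ).toBlocks₂₂)
      ((A t - L t * C t) * ((Sig t).toBlocks₁₂ - (Sig t).toBlocks₂₂)
        + ((Sig t).toBlocks₁₂ - (Sig t).toBlocks₂₂) * (A t - G t * Ψ t - L t * C t)ᵀ
        - ((Sig t).toBlocks₁₂ - (Sig t).toBlocks₂₂)ᵀ * (L t * C t)ᵀ) t := fun t ht => by
    rw [← toBlocks₁₂_sub_toBlocks₂₂_lyapunov (hSigsymm t) (hAtil t) (hDtil' t)]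
    exact hasDerivAt_of_forall_hasDerivAt_apply fun i j =>
      (hSig t ht (.inl i) (.inr j)).sub (hSig t ht (.inr i) (.inr j))
  intro t ht
  exact sub_eq_zero.1 (eq_zero_of_hasDerivWithinAt_mul_add_mul_sub_transpose_mul
    (hA.sub (hL_cont.matrix_mul hC)).continuousOn
    ((hA.sub (hG.matrix_mul hΨ)).sub (hL_cont.matrix_mul hC)).matrix_transpose.continuousOn
    (hL_cont.matrix_mul hC).matrix_transpose.continuousOn
    (fun t ht => (hE_deriv t ht).continuousAt.continuousWithinAt)
    (fun t ht => (hE_deriv t (Ico_subset_Icc_self ht)).hasDerivWithinAt) (sub_eq_zero.2 h0) t ht)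

/-- Under the block covariance dynamics `dΣ/dt = D̃ + ÃΣ + ΣÃᵀ` of the extended state
`(x,z)`, the relation `Σ_xz = Σ_zz` is preserved in time: if `Σ_xz(0) = Σ_zz(0)` then
`Σ_xz(t) = Σ_zz(t)` for all `t ∈ [0,T]`. -/
theorem stmt_8 {dx dy dω dν : ℕ} (T : ℝ) (hT : 0 < T)
    (A Ψ G : ℝ → Matrix (Fin dx) (Fin dx) ℝ)
    (C : ℝ → Matrix (Fin dy) (Fin dx) ℝ)
    (σ : ℝ → Matrix (Fin dx) (Fin dω) ℝ)
    (γ : ℝ → Matrix (Fin dy) (Fin dν) ℝ)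
    (hA : Continuous A) (hΨ : Continuous Ψ) (hG : Continuous G)
    (hC : Continuous C) (hσ : Continuous σ) (hγ : Continuous γ)
    (hγinv : ∀ t, IsUnit (γ t * (γ t)ᵀ).det)
    (Sig : ℝ → Matrix (Fin dx ⊕ Fin dx) (Fin dx ⊕ Fin dx) ℝ)
    (hSigcont : Continuous Sig)
    (hSigsymm : ∀ t, (Sig t).IsSymm)
    (S : ℝ → Matrix (Fin dx) (Fin dx) ℝ)
    (L : ℝ → Matrix (Fin dx) (Fin dy) ℝ)
    (hS : ∀ t, S t = (Sig t).toBlocks₁₁ - (Sig t).toBlocks₂₂)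
    (hL : ∀ t, L t = S t * (C t)ᵀ * (γ t * (γ t)ᵀ)⁻¹)
    (Atil Dtil : ℝ → Matrix (Fin dx ⊕ Fin dx) (Fin dx ⊕ Fin dx) ℝ)
    (hAtil : ∀ t, Atil t =
      fromBlocks (A t) (-(G t * Ψ t)) (L t * C t) (A t - G t * Ψ t - L t * C t))
    (hDtil : ∀ t, Dtil t =
      fromBlocks (σ t * (σ t)ᵀ) 0 0 (L t * (γ t * (γ t)ᵀ) * (L t)ᵀ))
    (hSig : ∀ t ∈ Icc (0 : ℝ) T, ∀ i j, HasDerivAt (fun τ => Sig τ i j)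
      ((Dtil t + Atil t * Sig t + Sig t * (Atil t)ᵀ) i j) t)
    (h0 : (Sig 0).toBlocks₁₂ = (Sig 0).toBlocks₂₂) :
    ∀ t ∈ Icc (0 : ℝ) T, (Sig t).toBlocks₁₂ = (Sig t).toBlocks₂₂ :=
  stmt_8_general T A Ψ G C σ γ hA hΨ hG hC hγ hγinv Sig hSigcont hSigsymm S L hS hL Atil Dtil hAtil
    hDtil hSig h0
end

section
/- Let T > 0 and d_s, d_u ∈ ℕ. Let A : [0,T] → ℝ^{d_s×d_s}, B : [0,T] → ℝ^{d_s×d_u}, Q : [0,T] → ℝ^{d_s×d_s} with symmetric values, R : [0,T] → ℝ^{d_u×d_u} with symmetric invertible values, σ : [0,T] → ℝ^{d_s×d_ω}, K : [0,T] → ℝ^{d_s×d_s}, and μ : [0,T] → ℝ^{d_s} be given. Set G := BR⁻¹Bᵀ and 𝒬 := (I−K)ᵀΠGΠ(I−K). Suppose Π : [0,T] → ℝ^{d_s×d_s} (symmetric-valued), α : [0,T] → ℝ^{d_s}, and β : [0,T] → ℝ are differentiable and satisfy −dΠ/dt = Q + AᵀΠ + ΠA − ΠGΠ + 𝒬, −dα/dt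 = (A − GΠ)ᵀα − 2𝒬μ, and −dβ/dt = tr(Πσσᵀ) − ¼αᵀGα + μᵀ𝒬μ on [0,T], with Π(T) = P, α(T) = 0, β(T) = 0. Define w(t,s) := sᵀΠ(t)s + α(t)ᵀs + β(t) and u*(t,s) := −½R(t)⁻¹B(t)ᵀ(2Π(t)K(t)(s − μ(t)) + 2Π(t)μ(t) + α(t)). Then for every t ∈ [0,T] and every s ∈ ℝ^{d_s}: −∂w/∂t(t,s) = sᵀQ(t)s + u*(t,s)ᵀR(t)u*(t,s) + (2Π(t)s + α(t))ᵀ(A(t)s + B(t)u*(t,s)) + tr(Π(t)σ(t)σ(t)ᵀ), and w(T,s) = sᵀPs. -/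
/-!
Differentiating the ansatz `w = sᵀΠs + αᵀs + β` entrywise and substituting the three ODEs
turns `∂w/∂t` into an explicit quadratic polynomial in `s`. On the Hamiltonian side, the
optimal control is the feedback `u* = -½R⁻¹Bᵀv` on the conditional gradient
`v = 2Π(K(s-μ) + μ) + α`; since `K(s-μ) + μ = s - (I-K)(s-μ)`, completing the square gives
`u*ᵀRu* + ∇wᵀBu* = -¼ ∇wᵀG∇w + (s-μ)ᵀ𝒬(s-μ)`, the full-information value plus the
price `𝒬` of the estimation error. Both sides then agree by the symmetry of `Π`, `G` and `𝒬`.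
-/

open Matrix Set

namespace Matrix

theorem IsSymm.transpose_mul_mul {n m α : Type*} [Fintype n] [CommSemiring α]
    {A : Matrix n n α} (hA : A.IsSymm) (B : Matrix n m α) : (Bᵀ * A * B).IsSymm := by
  simp only [IsSymm, transpose_mul, transpose_transpose, hA.eq, Matrix.mul_assoc]

theorem IsSymm.mul_mul_transpose {n m α : Type*} [Fintype m] [CommSemiring α]
    {A : Matrix m m α} (hA : A.IsSymm) (B : Matrix n m α) : (B * A * Bᵀ).IsSymm := by
  simpa only [transpose_transpose] using hA.transpose_mul_mul Bᵀ

theorem IsSymm.dotProduct_mulVec_comm {n α : Type*} [Fintype n] [CommSemiring α]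
    {A : Matrix n n α} (hA : A.IsSymm) (x y : n → α) : x ⬝ᵥ (A *ᵥ y) = y ⬝ᵥ (A *ᵥ x) := by
  simpa only [hA.eq] using dotProduct_transpose_mulVec A x y

theorem mulVec_dotProduct_mulVec_mulVec {n m α : Type*} [Fintype n] [Fintype m]
    [CommSemiring α] (G : Matrix n n α) (M : Matrix n m α) (x : m → α) :
    (M *ᵥ x) ⬝ᵥ (G *ᵥ (M *ᵥ x)) = x ⬝ᵥ ((Mᵀ * G * M) *ᵥ x) := by
  rw [← mulVec_mulVec, ← mulVec_mulVec, dotProduct_transpose_mulVec, dotProduct_comm]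

end Matrix

section Derivatives

variable {n m : Type*} [Fintype n] [Fintype m] {t : ℝ}

theorem hasDerivAt_dotProduct_of_apply {a : ℝ → n → ℝ} {a' : n → ℝ}
    (h : ∀ i, HasDerivAt (fun τ => a τ i) (a' i) t) (y : n → ℝ) :
    HasDerivAt (fun τ => a τ ⬝ᵥ y) (a' ⬝ᵥ y) t :=
  HasDerivAt.fun_sum fun i _ => (h i).mul_const (y i)

theorem hasDerivAt_dotProduct_mulVec_of_apply {M : ℝ → Matrix n m ℝ} {M' : Matrix n m ℝ}
    (h : ∀ i j, HasDerivAt (fun τ => M τ i j) (M' i j) t) (x : n → ℝ) (y : m → ℝ) :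
    HasDerivAt (fun τ => x ⬝ᵥ (M τ *ᵥ y)) (x ⬝ᵥ (M' *ᵥ y)) t := by
  have hrow : ∀ i, HasDerivAt (fun τ => (M τ *ᵥ y) i) ((M' *ᵥ y) i) t :=
    fun i => hasDerivAt_dotProduct_of_apply (a := fun τ => M τ i) (h i) y
  simpa only [dotProduct_comm x] using hasDerivAt_dotProduct_of_apply hrow x

end Derivatives

section Hamiltonian

variable {n m : Type*} [Fintype n] [Fintype m]

theorem control_terms_eq_of_eq_feedback [DecidableEq m] {R : Matrix m m ℝ}
    (hR : IsUnit R.det) (B : Matrix n m ℝ) (g v : n → ℝ) {u : m → ℝ}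
    (hu : u = -((2⁻¹ : ℝ) • ((R⁻¹ * Bᵀ) *ᵥ v))) :
    u ⬝ᵥ (R *ᵥ u) + g ⬝ᵥ (B *ᵥ u)
      = 4⁻¹ * (v ⬝ᵥ ((B * R⁻¹ * Bᵀ) *ᵥ v)) - 2⁻¹ * (g ⬝ᵥ ((B * R⁻¹ * Bᵀ) *ᵥ v)) := by
  have hRu : R *ᵥ u = -((2⁻¹ : ℝ) • (Bᵀ *ᵥ v)) := by
    rw [hu, mulVec_neg, mulVec_smul, mulVec_mulVec, ← Matrix.mul_assoc, mul_nonsing_inv R hR,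
      Matrix.one_mul]
  rw [hRu, hu]
  simp only [dotProduct_neg, dotProduct_smul, mulVec_neg, mulVec_smul, smul_eq_mul,
    ← mulVec_mulVec, dotProduct_transpose_mulVec]
  ring

theorem quadForm_sub_two_smul {G : Matrix n n ℝ} (hG : G.IsSymm) (g h : n → ℝ) :
    4⁻¹ * ((g - (2 : ℝ) • h) ⬝ᵥ (G *ᵥ (g - (2 : ℝ) • h)))
        - 2⁻¹ * (g ⬝ᵥ (G *ᵥ (g - (2 : ℝ) • h)))
      = h ⬝ᵥ (G *ᵥ h) - 4⁻¹ * (g ⬝ᵥ (G *ᵥ g)) := by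
  simp only [mulVec_sub, mulVec_smul, dotProduct_sub, sub_dotProduct, dotProduct_smul,
    smul_dotProduct, smul_eq_mul, hG.dotProduct_mulVec_comm h g]
  ring

theorem feedback_eq_gradient_sub [DecidableEq n] (P K : Matrix n n ℝ) (s μ α : n → ℝ) :
    (2 : ℝ) • ((P * K) *ᵥ (s - μ)) + (2 : ℝ) • (P *ᵥ μ) + α
      = ((2 : ℝ) • (P *ᵥ s) + α) - (2 : ℝ) • (P *ᵥ ((1 - K) *ᵥ (s - μ))) := by
  simp only [← mulVec_mulVec, sub_mulVec, one_mulVec, mulVec_sub]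
  module

theorem riccati_rhs_eq {A P G Q Qc : Matrix n n ℝ} (hP : P.IsSymm) (hG : G.IsSymm)
    (hQc : Qc.IsSymm) (s μ α : n → ℝ) (c : ℝ) :
    s ⬝ᵥ (-(Q + Aᵀ * P + P * A - P * G * P + Qc) *ᵥ s)
      + -((A - G * P)ᵀ *ᵥ α - (2 : ℝ) • (Qc *ᵥ μ)) ⬝ᵥ s
      + -(c - 4⁻¹ * (α ⬝ᵥ (G *ᵥ α)) + μ ⬝ᵥ (Qc *ᵥ μ))
    = -(s ⬝ᵥ (Q *ᵥ s)
        + ((s - μ) ⬝ᵥ (Qc *ᵥ (s - μ)) - 4⁻¹ * (((2 : ℝ) • (P *ᵥ s) + α) ⬝ᵥ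
            (G *ᵥ ((2 : ℝ) • (P *ᵥ s) + α))))
        + ((2 : ℝ) • (P *ᵥ s) + α) ⬝ᵥ (A *ᵥ s) + c) := by
  have hPA : s ⬝ᵥ ((Aᵀ * P) *ᵥ s) = (P *ᵥ s) ⬝ᵥ (A *ᵥ s) := by
    rw [← mulVec_mulVec, dotProduct_transpose_mulVec, dotProduct_comm]
  have hAP : s ⬝ᵥ ((P * A) *ᵥ s) = (P *ᵥ s) ⬝ᵥ (A *ᵥ s) := by
    rw [← mulVec_mulVec, hP.dotProduct_mulVec_comm, dotProduct_comm]
  have hPGP : s ⬝ᵥ ((P * G * P) *ᵥ s) = (P *ᵥ s) ⬝ᵥ (G *ᵥ (P *ᵥ s)) := by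
    rw [mulVec_dotProduct_mulVec_mulVec, hP.eq]
  have hα : ((A - G * P)ᵀ *ᵥ α) ⬝ᵥ s = α ⬝ᵥ (A *ᵥ s) - (P *ᵥ s) ⬝ᵥ (G *ᵥ α) := by
    rw [dotProduct_comm, dotProduct_transpose_mulVec, sub_mulVec, dotProduct_sub,
      ← mulVec_mulVec, hG.dotProduct_mulVec_comm]
  simp only [neg_mulVec, add_mulVec, sub_mulVec, mulVec_add, mulVec_sub, mulVec_smul,
    dotProduct_neg, neg_dotProduct, dotProduct_add, add_dotProduct, dotProduct_sub,
    sub_dotProduct, dotProduct_smul, smul_dotProduct, smul_eq_mul, hPA, hAP, hPGP, hα,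
    dotProduct_comm (Qc *ᵥ μ) s, hQc.dotProduct_mulVec_comm μ s, hG.dotProduct_mulVec_comm α]
  ring

theorem riccati_rhs_eq_neg_hamiltonian [DecidableEq n] [DecidableEq m]
    {A P K Q Qc G : Matrix n n ℝ} {B : Matrix n m ℝ} {R : Matrix m m ℝ}
    (hP : P.IsSymm) (hRsymm : R.IsSymm) (hR : IsUnit R.det) (hG : G = B * R⁻¹ * Bᵀ)
    (hQc : Qc = (1 - K)ᵀ * (P * G * P) * (1 - K)) (s μ α : n → ℝ) (c : ℝ) {u : m → ℝ}
    (hu : u = -((2⁻¹ : ℝ) • ((R⁻¹ * Bᵀ) *ᵥ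
      ((2 : ℝ) • ((P * K) *ᵥ (s - μ)) + (2 : ℝ) • (P *ᵥ μ) + α)))) :
    s ⬝ᵥ (-(Q + Aᵀ * P + P * A - P * G * P + Qc) *ᵥ s)
      + -((A - G * P)ᵀ *ᵥ α - (2 : ℝ) • (Qc *ᵥ μ)) ⬝ᵥ s
      + -(c - 4⁻¹ * (α ⬝ᵥ (G *ᵥ α)) + μ ⬝ᵥ (Qc *ᵥ μ))
    = -(s ⬝ᵥ (Q *ᵥ s) + u ⬝ᵥ (R *ᵥ u)
        + ((2 : ℝ) • (P *ᵥ s) + α) ⬝ᵥ (A *ᵥ s + B *ᵥ u) + c) := by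
  have hGsymm : G.IsSymm := by
    rw [hG]
    exact hRsymm.inv.mul_mul_transpose B
  have hQcsymm : Qc.IsSymm := by
    have hPGP : (P * G * P).IsSymm := by simpa only [hP.eq] using hGsymm.transpose_mul_mul P
    rw [hQc]
    exact hPGP.transpose_mul_mul (1 - K)
  have hcontrol : u ⬝ᵥ (R *ᵥ u) + ((2 : ℝ) • (P *ᵥ s) + α) ⬝ᵥ (B *ᵥ u)
      = (s - μ) ⬝ᵥ (Qc *ᵥ (s - μ))
        - 4⁻¹ * (((2 : ℝ) • (P *ᵥ s) + α) ⬝ᵥ (G *ᵥ ((2 : ℝ) • (P *ᵥ s) + α))) := by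
    rw [control_terms_eq_of_eq_feedback hR B _ _ hu, feedback_eq_gradient_sub, ← hG,
      quadForm_sub_two_smul hGsymm, mulVec_mulVec, mulVec_dotProduct_mulVec_mulVec, hQc]
    simp only [transpose_mul, hP.eq, Matrix.mul_assoc]
  rw [riccati_rhs_eq hP hGsymm hQcsymm, ← hcontrol, dotProduct_add]
  ring

end Hamiltonian

theorem stmt_9_general {ds du dω : ℕ} (T : ℝ)
    (A : ℝ → Matrix (Fin ds) (Fin ds) ℝ)
    (B : ℝ → Matrix (Fin ds) (Fin du) ℝ)
    (Q : ℝ → Matrix (Fin ds) (Fin ds) ℝ)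
    (R : ℝ → Matrix (Fin du) (Fin du) ℝ)
    (hRsymm : ∀ t, (R t).IsSymm) (hRinv : ∀ t, IsUnit (R t).det)
    (σ : ℝ → Matrix (Fin ds) (Fin dω) ℝ)
    (K : ℝ → Matrix (Fin ds) (Fin ds) ℝ)
    (μ : ℝ → Fin ds → ℝ)
    (Pmat : Matrix (Fin ds) (Fin ds) ℝ)
    (G : ℝ → Matrix (Fin ds) (Fin ds) ℝ)
    (hG : ∀ t, G t = B t * (R t)⁻¹ * (B t)ᵀ)
    (P : ℝ → Matrix (Fin ds) (Fin ds) ℝ) (hPsymm : ∀ t, (P t).IsSymm)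
    (Qc : ℝ → Matrix (Fin ds) (Fin ds) ℝ)
    (hQc : ∀ t, Qc t = (1 - K t)ᵀ * (P t * G t * P t) * (1 - K t))
    (α : ℝ → Fin ds → ℝ) (β : ℝ → ℝ)
    (hP : ∀ t ∈ Icc (0 : ℝ) T, ∀ i j, HasDerivAt (fun τ => P τ i j)
      ((-(Q t + (A t)ᵀ * P t + P t * A t - P t * G t * P t + Qc t)) i j) t)
    (hα : ∀ t ∈ Icc (0 : ℝ) T, ∀ i, HasDerivAt (fun τ => α τ i)
      ((-((A t - G t * P t)ᵀ *ᵥ α t - (2 : ℝ) • (Qc t *ᵥ μ t))) i) t)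
    (hβ : ∀ t ∈ Icc (0 : ℝ) T, HasDerivAt β
      (-((P t * (σ t * (σ t)ᵀ)).trace - (4⁻¹ : ℝ) * (α t ⬝ᵥ (G t *ᵥ α t))
        + μ t ⬝ᵥ (Qc t *ᵥ μ t))) t)
    (hPT : P T = Pmat) (hαT : α T = 0) (hβT : β T = 0) :
    ∀ t ∈ Icc (0 : ℝ) T, ∀ s : Fin ds → ℝ, ∀ u : Fin du → ℝ,
      u = -((2⁻¹ : ℝ) • (((R t)⁻¹ * (B t)ᵀ) *ᵥ
            ((2 : ℝ) • ((P t * K t) *ᵥ (s - μ t)) + (2 : ℝ) • (P t *ᵥ μ t) + α t))) →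
      HasDerivAt (fun τ => s ⬝ᵥ (P τ *ᵥ s) + α τ ⬝ᵥ s + β τ)
        (-(s ⬝ᵥ (Q t *ᵥ s) + u ⬝ᵥ (R t *ᵥ u)
          + ((2 : ℝ) • (P t *ᵥ s) + α t) ⬝ᵥ (A t *ᵥ s + B t *ᵥ u)
          + (P t * (σ t * (σ t)ᵀ)).trace)) t
      ∧ s ⬝ᵥ (P T *ᵥ s) + α T ⬝ᵥ s + β T = s ⬝ᵥ (Pmat *ᵥ s) := by
  intro t ht s u hu
  refine ⟨?_, by rw [hPT, hαT, hβT, zero_dotProduct, add_zero, add_zero]⟩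
  have hw := ((hasDerivAt_dotProduct_mulVec_of_apply (hP t ht) s s).add
    (hasDerivAt_dotProduct_of_apply (hα t ht) s)).add (hβ t ht)
  rwa [riccati_rhs_eq_neg_hamiltonian (hPsymm t) (hRsymm t) (hRinv t) (hG t) (hQc t) s (μ t)
    (α t) _ hu] at hw

/-- Verification that the quadratic ansatz `w(t,s) = sᵀΠs + αᵀs + β` solves the
Hamilton–Jacobi–Bellman equation of the LQG problem with memory limitation pointwise,
at the optimal control `u*(t,s) = −½R⁻¹Bᵀ(2ΠK(s−μ) + 2Πμ + α)`, given that `Π` solves the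
partially observable Riccati equation and `α`, `β` solve the associated linear ODEs. -/
theorem stmt_9 {ds du dω : ℕ} (T : ℝ) (hT : 0 < T)
    (A : ℝ → Matrix (Fin ds) (Fin ds) ℝ)
    (B : ℝ → Matrix (Fin ds) (Fin du) ℝ)
    (Q : ℝ → Matrix (Fin ds) (Fin ds) ℝ) (hQsymm : ∀ t, (Q t).IsSymm)
    (R : ℝ → Matrix (Fin du) (Fin du) ℝ)
    (hRsymm : ∀ t, (R t).IsSymm) (hRinv : ∀ t, IsUnit (R t).det)
    (σ : ℝ → Matrix (Fin ds) (Fin dω) ℝ)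
    (K : ℝ → Matrix (Fin ds) (Fin ds) ℝ)
    (μ : ℝ → Fin ds → ℝ)
    (Pmat : Matrix (Fin ds) (Fin ds) ℝ)
    (G : ℝ → Matrix (Fin ds) (Fin ds) ℝ)
    (hG : ∀ t, G t = B t * (R t)⁻¹ * (B t)ᵀ)
    (P : ℝ → Matrix (Fin ds) (Fin ds) ℝ) (hPsymm : ∀ t, (P t).IsSymm)
    (Qc : ℝ → Matrix (Fin ds) (Fin ds) ℝ)
    (hQc : ∀ t, Qc t = (1 - K t)ᵀ * (P t * G t * P t) * (1 - K t))
    (α : ℝ → Fin ds → ℝ) (β : ℝ → ℝ)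
    (hP : ∀ t ∈ Icc (0 : ℝ) T, ∀ i j, HasDerivAt (fun τ => P τ i j)
      ((-(Q t + (A t)ᵀ * P t + P t * A t - P t * G t * P t + Qc t)) i j) t)
    (hα : ∀ t ∈ Icc (0 : ℝ) T, ∀ i, HasDerivAt (fun τ => α τ i)
      ((-((A t - G t * P t)ᵀ *ᵥ α t - (2 : ℝ) • (Qc t *ᵥ μ t))) i) t)
    (hβ : ∀ t ∈ Icc (0 : ℝ) T, HasDerivAt β
      (-((P t * (σ t * (σ t)ᵀ)).trace - (4⁻¹ : ℝ) * (α t ⬝ᵥ (G t *ᵥ α t))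
        + μ t ⬝ᵥ (Qc t *ᵥ μ t))) t)
    (hPT : P T = Pmat) (hαT : α T = 0) (hβT : β T = 0) :
    ∀ t ∈ Icc (0 : ℝ) T, ∀ s : Fin ds → ℝ, ∀ u : Fin du → ℝ,
      u = -((2⁻¹ : ℝ) • (((R t)⁻¹ * (B t)ᵀ) *ᵥ
            ((2 : ℝ) • ((P t * K t) *ᵥ (s - μ t)) + (2 : ℝ) • (P t *ᵥ μ t) + α t))) →
      HasDerivAt (fun τ => s ⬝ᵥ (P τ *ᵥ s) + α τ ⬝ᵥ s + β τ)
        (-(s ⬝ᵥ (Q t *ᵥ s) + u ⬝ᵥ (R t *ᵥ u)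
          + ((2 : ℝ) • (P t *ᵥ s) + α t) ⬝ᵥ (A t *ᵥ s + B t *ᵥ u)
          + (P t * (σ t * (σ t)ᵀ)).trace)) t
      ∧ s ⬝ᵥ (P T *ᵥ s) + α T ⬝ᵥ s + β T = s ⬝ᵥ (Pmat *ᵥ s) :=
  stmt_9_general T A B Q R hRsymm hRinv σ K μ Pmat G hG P hPsymm Qc hQc α β hP hα hβ hPT hαT hβT
end

section
/- Let T > 0 and d_x, d_u, d_y ∈ ℕ. Let A, Q : [0,T] → ℝ^{d_x×d_x} (Q symmetric-valued), B : [0,T] → ℝ^{d_x×d_u}, R : [0,T] → ℝ^{d_u×d_u} with symmetric invertible values, σ : [0,T] → ℝ^{d_x×d_ω}, C : [0,T] → ℝ^{d_y×d_x}, γ : [0,T] → ℝ^{d_y×d_ν} with γγᵀ invertible, and S : [0,T] → ℝ^{d_x×d_x} symmetric-valued be given. Set G := BR⁻¹Bᵀ and L := SCᵀ(γγᵀ)⁻¹. Suppose Ψ, Φ : [0,T] → ℝ^{d_x×d_x} (symmetric-valued) and β : [0,T] → ℝ are differentiable and satisfy −dΨ/dt = Q + AᵀΨ + ΨA − ΨGΨ,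 −dΦ/dt = (A − LC)ᵀΦ + Φ(A − LC) + ΨGΨ, and −dβ/dt = tr((Ψ+Φ)σσᵀ) + tr(ΦSCᵀ(γγᵀ)⁻¹CS) on [0,T]. Define w(t,x,z) := xᵀΨ(t)x + (x−z)ᵀΦ(t)(x−z) + β(t), u*(t,z) := −R⁻¹BᵀΨz, v*(t,z) := (A − GΨ − LC)z, and κ*(t) := L(t). Then for every t ∈ [0,T] and every x, z ∈ ℝ^{d_x}: −∂w/∂t(t,x,z) = xᵀQx + u*ᵀRu* + (2Ψx + 2Φ(x−z))ᵀ(Ax + Bu*) + (−2Φ(x−z))ᵀ(v* + κ*Cx) + tr((Ψ+Φ)σσᵀ) + tr(Φκ*γγᵀκ*ᵀ). -/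
/-!
Differentiating the ansatz in `t` and substituting the Riccati equation for `Ψ` and the linear
equations for `Φ` and `β` turns the HJB equation into an algebraic identity. Its trace part is
`LγγᵀLᵀ = SCᵀ(γγᵀ)⁻¹CS` for the Kalman gain `L`. For its quadratic part, the control cost is
`u*ᵀRu* = zᵀΨGΨz`, the cross terms `2(Ψx)ᵀAx` and `2(Φe)ᵀ(A − LC)e` with `e = x − z`
symmetrise into the `AᵀΨ + ΨA` and `(A − LC)ᵀΦ + Φ(A − LC)` terms, and the remaining
`ΨGΨ`-terms cancel by expanding `eᵀΨGΨe`.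
-/

open Matrix Set

namespace Matrix

theorem isSymm_mul_mul_transpose {m n α : Type*} [Fintype m] [CommSemiring α] {A : Matrix m m α}
    (B : Matrix n m α) (hA : A.IsSymm) : (B * A * Bᵀ).IsSymm := by
  simp only [IsSymm, transpose_mul, transpose_transpose, hA.eq, Matrix.mul_assoc]

section QuadraticForm

variable {m n α : Type*} [Fintype m] [Fintype n]

theorem hasDerivAt_dotProduct_mulVec {M : ℝ → Matrix m n ℝ} {M' : Matrix m n ℝ} {t : ℝ}
    (x : m → ℝ) (y : n → ℝ) (h : ∀ i j, HasDerivAt (fun τ => M τ i j) (M' i j) t) :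
    HasDerivAt (fun τ => x ⬝ᵥ (M τ *ᵥ y)) (x ⬝ᵥ (M' *ᵥ y)) t := by
  simp only [dotProduct, mulVec]
  exact HasDerivAt.fun_sum fun i _ =>
    (HasDerivAt.fun_sum fun j _ => (h i j).mul_const (y j)).const_mul (x i)

variable [CommRing α]

theorem IsSymm.dotProduct_mulVec_comm_s10 {M : Matrix n n α} (hM : M.IsSymm) (x y : n → α) :
    x ⬝ᵥ (M *ᵥ y) = y ⬝ᵥ (M *ᵥ x) := by
  rw [← dotProduct_transpose_mulVec, hM.eq]

theorem IsSymm.dotProduct_mulVec_sub {M : Matrix n n α} (hM : M.IsSymm) (x y : n → α) :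
    (x - y) ⬝ᵥ (M *ᵥ (x - y)) = x ⬝ᵥ (M *ᵥ x) - 2 * x ⬝ᵥ (M *ᵥ y) + y ⬝ᵥ (M *ᵥ y) := by
  rw [mulVec_sub, dotProduct_sub, sub_dotProduct, sub_dotProduct, hM.dotProduct_mulVec_comm_s10 y x]
  ring

theorem IsSymm.dotProduct_transpose_mul_add_mul_mulVec {M : Matrix n n α} (hM : M.IsSymm)
    (N : Matrix n n α) (x : n → α) :
    x ⬝ᵥ ((Nᵀ * M + M * N) *ᵥ x) = 2 * (M *ᵥ x) ⬝ᵥ (N *ᵥ x) := by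
  rw [add_mulVec, dotProduct_add, ← mulVec_mulVec, ← mulVec_mulVec, dotProduct_transpose_mulVec,
    hM.dotProduct_mulVec_comm_s10, dotProduct_comm (N *ᵥ x)]
  ring

end QuadraticForm

section Gains

variable {m n α : Type*} [Fintype m] [Fintype n] [DecidableEq n] [CommRing α]

theorem neg_inv_mulVec_dotProduct_mulVec {R : Matrix n n α} (hR : IsUnit R.det) (y : n → α) :
    (-(R⁻¹ *ᵥ y)) ⬝ᵥ (R *ᵥ -(R⁻¹ *ᵥ y)) = y ⬝ᵥ (R⁻¹ *ᵥ y) := by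
  rw [mulVec_neg, neg_dotProduct, dotProduct_neg, neg_neg, mulVec_mulVec, mul_nonsing_inv _ hR,
    one_mulVec, dotProduct_comm]

theorem kalmanGain_mul_mul_transpose {S : Matrix m m α} {W : Matrix n n α} (hS : S.IsSymm)
    (hW : W.IsSymm) (hWinv : IsUnit W.det) (C : Matrix n m α) :
    S * Cᵀ * W⁻¹ * W * (S * Cᵀ * W⁻¹)ᵀ = S * Cᵀ * W⁻¹ * C * S := by
  rw [Matrix.mul_assoc _ W⁻¹ W, nonsing_inv_mul _ hWinv, Matrix.mul_one]
  simp only [transpose_mul, transpose_transpose, hS.eq, hW.inv.eq, Matrix.mul_assoc]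

theorem dotProduct_mulVec_feedback {R : Matrix n n α} {Ψ : Matrix m m α} (hR : IsUnit R.det)
    (hΨ : Ψ.IsSymm) (B : Matrix m n α) (z : m → α) :
    (-((R⁻¹ * Bᵀ * Ψ) *ᵥ z)) ⬝ᵥ (R *ᵥ -((R⁻¹ * Bᵀ * Ψ) *ᵥ z))
      = z ⬝ᵥ ((Ψ * (B * R⁻¹ * Bᵀ) * Ψ) *ᵥ z) := by
  have hfactor : Ψ * (B * R⁻¹ * Bᵀ) * Ψ = (Bᵀ * Ψ)ᵀ * (R⁻¹ * (Bᵀ * Ψ)) := by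
    simp only [transpose_mul, transpose_transpose, hΨ.eq, Matrix.mul_assoc]
  rw [hfactor, Matrix.mul_assoc, ← mulVec_mulVec z R⁻¹,
    neg_inv_mulVec_dotProduct_mulVec hR, ← mulVec_mulVec _ (Bᵀ * Ψ)ᵀ,
    dotProduct_transpose_mulVec, dotProduct_comm, mulVec_mulVec]

end Gains

end Matrix

theorem quadratic_hjb_identity {n α : Type*} [Fintype n] [CommRing α]
    {Ψ Φ G : Matrix n n α} (hΨ : Ψ.IsSymm) (hΦ : Φ.IsSymm) (hΨGΨ : (Ψ * G * Ψ).IsSymm)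
    (A Q K : Matrix n n α) (x z : n → α) :
    x ⬝ᵥ ((Q + Aᵀ * Ψ + Ψ * A - Ψ * G * Ψ) *ᵥ x)
        + (x - z) ⬝ᵥ (((A - K)ᵀ * Φ + Φ * (A - K) + Ψ * G * Ψ) *ᵥ (x - z))
      = x ⬝ᵥ (Q *ᵥ x) + z ⬝ᵥ ((Ψ * G * Ψ) *ᵥ z)
        + ((2 : α) • (Ψ *ᵥ x) + (2 : α) • (Φ *ᵥ (x - z))) ⬝ᵥ (A *ᵥ x + -((G * Ψ) *ᵥ z))
        + (-((2 : α) • (Φ *ᵥ (x - z)))) ⬝ᵥ ((A - G * Ψ - K) *ᵥ z + K *ᵥ x) := by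
  have hΨA := hΨ.dotProduct_transpose_mul_add_mul_mulVec A x
  have hΦA := hΦ.dotProduct_transpose_mul_add_mul_mulVec (A - K) (x - z)
  have hΨGΨx := hΨGΨ.dotProduct_mulVec_sub x z
  have hcross : (Ψ *ᵥ x) ⬝ᵥ ((G * Ψ) *ᵥ z) = x ⬝ᵥ ((Ψ * G * Ψ) *ᵥ z) := by
    rw [dotProduct_comm, ← dotProduct_transpose_mulVec, hΨ.eq, mulVec_mulVec, Matrix.mul_assoc]
  have hdrift :
      A *ᵥ x + -((G * Ψ) *ᵥ z) - ((A - G * Ψ - K) *ᵥ z + K *ᵥ x) = (A - K) *ᵥ (x - z) := by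
    simp only [sub_mulVec, mulVec_sub]
    abel
  have hsplit : Q + Aᵀ * Ψ + Ψ * A - Ψ * G * Ψ = Q + (Aᵀ * Ψ + Ψ * A) - Ψ * G * Ψ := by abel
  rw [hsplit, sub_mulVec, add_mulVec Q, dotProduct_sub, dotProduct_add, hΨA,
    add_mulVec _ (Ψ * G * Ψ), dotProduct_add, hΦA, hΨGΨx, ← hdrift, ← hcross]
  simp only [add_dotProduct, neg_dotProduct, smul_dotProduct, smul_eq_mul, dotProduct_add,
    dotProduct_neg, dotProduct_sub]
  ring

theorem stmt_10_general {dx du dy dω dν : ℕ} (T : ℝ)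
    (A : ℝ → Matrix (Fin dx) (Fin dx) ℝ)
    (Q : ℝ → Matrix (Fin dx) (Fin dx) ℝ)
    (B : ℝ → Matrix (Fin dx) (Fin du) ℝ)
    (R : ℝ → Matrix (Fin du) (Fin du) ℝ)
    (hRsymm : ∀ t, (R t).IsSymm) (hRinv : ∀ t, IsUnit (R t).det)
    (σ : ℝ → Matrix (Fin dx) (Fin dω) ℝ)
    (C : ℝ → Matrix (Fin dy) (Fin dx) ℝ)
    (γ : ℝ → Matrix (Fin dy) (Fin dν) ℝ) (hγinv : ∀ t, IsUnit (γ t * (γ t)ᵀ).det)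
    (S : ℝ → Matrix (Fin dx) (Fin dx) ℝ) (hSsymm : ∀ t, (S t).IsSymm)
    (G : ℝ → Matrix (Fin dx) (Fin dx) ℝ)
    (hG : ∀ t, G t = B t * (R t)⁻¹ * (B t)ᵀ)
    (L : ℝ → Matrix (Fin dx) (Fin dy) ℝ)
    (hL : ∀ t, L t = S t * (C t)ᵀ * (γ t * (γ t)ᵀ)⁻¹)
    (Ψ Φ : ℝ → Matrix (Fin dx) (Fin dx) ℝ)
    (hΨsymm : ∀ t, (Ψ t).IsSymm) (hΦsymm : ∀ t, (Φ t).IsSymm)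
    (β : ℝ → ℝ)
    (hΨ : ∀ t ∈ Icc (0 : ℝ) T, ∀ i j, HasDerivAt (fun τ => Ψ τ i j)
      ((-(Q t + (A t)ᵀ * Ψ t + Ψ t * A t - Ψ t * G t * Ψ t)) i j) t)
    (hΦ : ∀ t ∈ Icc (0 : ℝ) T, ∀ i j, HasDerivAt (fun τ => Φ τ i j)
      ((-((A t - L t * C t)ᵀ * Φ t + Φ t * (A t - L t * C t)
        + Ψ t * G t * Ψ t)) i j) t)
    (hβ : ∀ t ∈ Icc (0 : ℝ) T, HasDerivAt β
      (-(((Ψ t + Φ t) * (σ t * (σ t)ᵀ)).trace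
        + (Φ t * (S t * (C t)ᵀ * (γ t * (γ t)ᵀ)⁻¹ * C t * S t)).trace)) t) :
    ∀ t ∈ Icc (0 : ℝ) T, ∀ x z : Fin dx → ℝ, ∀ u : Fin du → ℝ, ∀ v : Fin dx → ℝ,
      ∀ κ : Matrix (Fin dx) (Fin dy) ℝ,
      u = -(((R t)⁻¹ * (B t)ᵀ * Ψ t) *ᵥ z) →
      v = (A t - G t * Ψ t - L t * C t) *ᵥ z →
      κ = L t →
      HasDerivAt (fun τ => x ⬝ᵥ (Ψ τ *ᵥ x) + (x - z) ⬝ᵥ (Φ τ *ᵥ (x - z)) + β τ)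
        (-(x ⬝ᵥ (Q t *ᵥ x) + u ⬝ᵥ (R t *ᵥ u)
          + ((2 : ℝ) • (Ψ t *ᵥ x) + (2 : ℝ) • (Φ t *ᵥ (x - z))) ⬝ᵥ (A t *ᵥ x + B t *ᵥ u)
          + (-((2 : ℝ) • (Φ t *ᵥ (x - z)))) ⬝ᵥ (v + (κ * C t) *ᵥ x)
          + ((Ψ t + Φ t) * (σ t * (σ t)ᵀ)).trace
          + (Φ t * (κ * (γ t * (γ t)ᵀ) * κᵀ)).trace)) t := by
  intro t ht x z u v κ hu hv hκ
  have hGsymm : (G t).IsSymm := hG t ▸ isSymm_mul_mul_transpose (B t) (hRsymm t).inv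
  have hΨGΨ : (Ψ t * G t * Ψ t).IsSymm := by
    simpa only [(hΨsymm t).eq] using isSymm_mul_mul_transpose (Ψ t) hGsymm
  have hcost : u ⬝ᵥ (R t *ᵥ u) = z ⬝ᵥ ((Ψ t * G t * Ψ t) *ᵥ z) := by
    rw [hu, hG, dotProduct_mulVec_feedback (hRinv t) (hΨsymm t)]
  have hBu : B t *ᵥ u = -((G t * Ψ t) *ᵥ z) := by
    rw [hu, hG, mulVec_neg, mulVec_mulVec]
    simp only [Matrix.mul_assoc]
  have hnoise : κ * (γ t * (γ t)ᵀ) * κᵀ = S t * (C t)ᵀ * (γ t * (γ t)ᵀ)⁻¹ * C t * S t := by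
    rw [hκ, hL]
    have hW : (γ t * (γ t)ᵀ).IsSymm := by
      rw [IsSymm, transpose_mul, transpose_transpose]
    exact kalmanGain_mul_mul_transpose (hSsymm t) hW (hγinv t) (C t)
  refine (((hasDerivAt_dotProduct_mulVec x x (hΨ t ht)).fun_add
    (hasDerivAt_dotProduct_mulVec (x - z) (x - z) (hΦ t ht))).fun_add (hβ t ht)).congr_deriv ?_
  rw [hcost, hBu, hnoise, hv, hκ, neg_mulVec, neg_mulVec, dotProduct_neg, dotProduct_neg]
  linear_combination -quadratic_hjb_identity (hΨsymm t) (hΦsymm t) hΨGΨ (A t) (Q t) (L t * C t) x z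

/-- Verification that the quadratic ansatz `w(t,x,z) = xᵀΨx + (x−z)ᵀΦ(x−z) + β` solves
the Hamilton–Jacobi–Bellman equation of the LQG problem of the conventional POSC
(treated via memory-limited POSC, memory dimension = state dimension) pointwise at the
controls `u* = −R⁻¹BᵀΨz`, `v* = (A − GΨ − LC)z`, `κ* = L`, given that `Ψ` solves the
Riccati equation and `Φ`, `β` solve the stated linear ODEs. Here `S` plays the role of the
conditional covariance and `L = SCᵀ(γγᵀ)⁻¹` is the Kalman gain. -/
theorem stmt_10 {dx du dy dω dν : ℕ} (T : ℝ) (hT : 0 < T)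
    (A : ℝ → Matrix (Fin dx) (Fin dx) ℝ)
    (Q : ℝ → Matrix (Fin dx) (Fin dx) ℝ) (hQsymm : ∀ t, (Q t).IsSymm)
    (B : ℝ → Matrix (Fin dx) (Fin du) ℝ)
    (R : ℝ → Matrix (Fin du) (Fin du) ℝ)
    (hRsymm : ∀ t, (R t).IsSymm) (hRinv : ∀ t, IsUnit (R t).det)
    (σ : ℝ → Matrix (Fin dx) (Fin dω) ℝ)
    (C : ℝ → Matrix (Fin dy) (Fin dx) ℝ)
    (γ : ℝ → Matrix (Fin dy) (Fin dν) ℝ) (hγinv : ∀ t, IsUnit (γ t * (γ t)ᵀ).det)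
    (S : ℝ → Matrix (Fin dx) (Fin dx) ℝ) (hSsymm : ∀ t, (S t).IsSymm)
    (G : ℝ → Matrix (Fin dx) (Fin dx) ℝ)
    (hG : ∀ t, G t = B t * (R t)⁻¹ * (B t)ᵀ)
    (L : ℝ → Matrix (Fin dx) (Fin dy) ℝ)
    (hL : ∀ t, L t = S t * (C t)ᵀ * (γ t * (γ t)ᵀ)⁻¹)
    (Ψ Φ : ℝ → Matrix (Fin dx) (Fin dx) ℝ)
    (hΨsymm : ∀ t, (Ψ t).IsSymm) (hΦsymm : ∀ t, (Φ t).IsSymm)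
    (β : ℝ → ℝ)
    (hΨ : ∀ t ∈ Icc (0 : ℝ) T, ∀ i j, HasDerivAt (fun τ => Ψ τ i j)
      ((-(Q t + (A t)ᵀ * Ψ t + Ψ t * A t - Ψ t * G t * Ψ t)) i j) t)
    (hΦ : ∀ t ∈ Icc (0 : ℝ) T, ∀ i j, HasDerivAt (fun τ => Φ τ i j)
      ((-((A t - L t * C t)ᵀ * Φ t + Φ t * (A t - L t * C t)
        + Ψ t * G t * Ψ t)) i j) t)
    (hβ : ∀ t ∈ Icc (0 : ℝ) T, HasDerivAt β
      (-(((Ψ t + Φ t) * (σ t * (σ t)ᵀ)).trace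
        + (Φ t * (S t * (C t)ᵀ * (γ t * (γ t)ᵀ)⁻¹ * C t * S t)).trace)) t) :
    ∀ t ∈ Icc (0 : ℝ) T, ∀ x z : Fin dx → ℝ, ∀ u : Fin du → ℝ, ∀ v : Fin dx → ℝ,
      ∀ κ : Matrix (Fin dx) (Fin dy) ℝ,
      u = -(((R t)⁻¹ * (B t)ᵀ * Ψ t) *ᵥ z) →
      v = (A t - G t * Ψ t - L t * C t) *ᵥ z →
      κ = L t →
      HasDerivAt (fun τ => x ⬝ᵥ (Ψ τ *ᵥ x) + (x - z) ⬝ᵥ (Φ τ *ᵥ (x - z)) + β τ)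
        (-(x ⬝ᵥ (Q t *ᵥ x) + u ⬝ᵥ (R t *ᵥ u)
          + ((2 : ℝ) • (Ψ t *ᵥ x) + (2 : ℝ) • (Φ t *ᵥ (x - z))) ⬝ᵥ (A t *ᵥ x + B t *ᵥ u)
          + (-((2 : ℝ) • (Φ t *ᵥ (x - z)))) ⬝ᵥ (v + (κ * C t) *ᵥ x)
          + ((Ψ t + Φ t) * (σ t * (σ t)ᵀ)).trace
          + (Φ t * (κ * (γ t * (γ t)ᵀ) * κᵀ)).trace)) t :=
  stmt_10_general T A Q B R hRsymm hRinv σ C γ hγinv S hSsymm G hG L hL Ψ Φ hΨsymm hΦsymm β hΨ hΦ hβ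
end
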